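/- (O(1/t) convergence of the prediction-correction method.) Let β > 0 and t ∈ ℕ. For k = 0, 1, …, t let Q_k, M_k ∈ ℝ^{(n+m)×(n+m)} with M_k invertible, Σ_k := Q_k·M_k⁻¹ symmetric positive semidefinite, G_k := Q_kᵀ + Q_k − β·M_kᵀΣ_kM_k positive semidefinite, and Σ_{k−1} − Σ_k positive semidefinite for k = 1, …, t. Let w⁰ ∈ ℝⁿ⁺ᵐ and for each k suppose w̃^k = (x̃^k, λ̃^k) ∈ Ω satisfies the prediction VI at w^k with matrix Q_k and w^{k+1} = w^k − β·M_k(w^k − w̃^k). Define x̃_t = (1/(1+t))·Σ_{k=0}^{t} x̃^k and w̃_t = (1/(1+t))·Σ_{k=0}^{t} w̃^k. Then w̃_t ∈ Ω and for every w = (x, λ) ∈ Ω: f(x̃_t) − f(x) + (w̃_t − w)ᵀΓ(w) ≤ ‖w − w⁰‖²_{Σ₀} / (2β(1 + t)). -/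

import Mathlib

open Matrix

/-- The continuous linear functional `u ↦ v ⬝ᵥ u` on `ℝⁿ`, used to express
that `v` is the gradient of a scalar function. -/
noncomputable def dotCLM {n : ℕ} (v : Fin n → ℝ) : (Fin n → ℝ) →L[ℝ] ℝ :=
  LinearMap.toContinuousLinearMap (∑ j, v j • LinearMap.proj j)

/-- The `x`-part of `w = (x, λ) ∈ ℝⁿ⁺ᵐ`. -/
def xpart {n m : ℕ} (w : Fin n ⊕ Fin m → ℝ) : Fin n → ℝ := fun i => w (Sum.inl i)

/-- The `λ`-part of `w = (x, λ) ∈ ℝⁿ⁺ᵐ`. -/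
def lpart {n m : ℕ} (w : Fin n ⊕ Fin m → ℝ) : Fin m → ℝ := fun j => w (Sum.inr j)

/-- `Ω = X × ℝ₊ᵐ` viewed inside `ℝⁿ⁺ᵐ`. -/
def OmegaSet {n m : ℕ} (X : Set (Fin n → ℝ)) : Set (Fin n ⊕ Fin m → ℝ) :=
  {w | xpart w ∈ X ∧ ∀ j, 0 ≤ lpart w j}

/-- `Γ(w) = (DΦ(x)ᵀλ, −Φ(x))` for `w = (x, λ)`, where row `i` of the Jacobian `DΦ`
is the gradient `φ' i`. -/
noncomputable def Gam {n m : ℕ} (φ : Fin m → (Fin n → ℝ) → ℝ)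
    (φ' : Fin m → (Fin n → ℝ) → (Fin n → ℝ)) (w : Fin n ⊕ Fin m → ℝ) :
    Fin n ⊕ Fin m → ℝ :=
  Sum.elim (∑ i, lpart w i • φ' i (xpart w)) (fun i => -(φ i (xpart w)))

lemma dotCLM_apply {n : ℕ} (v u : Fin n → ℝ) : dotCLM v u = v ⬝ᵥ u := by
  simp [dotCLM, dotProduct]

lemma dot_sum {ι κ : Type*} [Fintype ι] (v : ι → ℝ) (s : Finset κ) (g : κ → ι → ℝ) :
    v ⬝ᵥ (∑ i ∈ s, g i) = ∑ i ∈ s, v ⬝ᵥ g i := by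
  simp only [dotProduct, Finset.sum_apply, Finset.mul_sum]
  exact Finset.sum_comm

lemma sum_dot {ι κ : Type*} [Fintype ι] (v : ι → ℝ) (s : Finset κ) (g : κ → ι → ℝ) :
    (∑ i ∈ s, g i) ⬝ᵥ v = ∑ i ∈ s, g i ⬝ᵥ v := by
  rw [dotProduct_comm, dot_sum]
  exact Finset.sum_congr rfl fun i _ => dotProduct_comm _ _

lemma grad_ineq {n : ℕ} {g : (Fin n → ℝ) → ℝ} {g' : (Fin n → ℝ) → (Fin n → ℝ)}
    (hg : ConvexOn ℝ Set.univ g) (hg' : ∀ x, HasFDerivAt g (dotCLM (g' x)) x)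
    (x y : Fin n → ℝ) : g' x ⬝ᵥ (y - x) ≤ g y - g x := by
  have hcurve : HasDerivAt (fun s : ℝ => s • (y - x) + x) (y - x) 0 := by
    simpa using ((hasDerivAt_id (0:ℝ)).smul_const (y - x)).add_const x
  have hgc : ConvexOn ℝ Set.univ (fun s : ℝ => g (s • (y - x) + x)) := by
    have := hg.comp_affineMap (AffineMap.lineMap x y)
    simpa [Function.comp_def, AffineMap.lineMap_apply, vsub_eq_sub, vadd_eq_add] using this
  have hx0 : HasFDerivAt g (dotCLM (g' x)) ((0:ℝ) • (y - x) + x) := by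
    simpa using hg' x
  have hd : HasDerivAt (fun s : ℝ => g (s • (y - x) + x)) (g' x ⬝ᵥ (y - x)) 0 := by
    have := hx0.comp_hasDerivAt 0 hcurve
    simpa [Function.comp_def, dotCLM_apply] using this
  have := hgc.le_slope_of_hasDerivAt (Set.mem_univ (0:ℝ)) (Set.mem_univ (1:ℝ)) one_pos hd
  simp only [slope_def_field] at this
  simp only [one_smul, zero_smul, zero_add, sub_zero, div_one, sub_add_cancel] at this
  linarith [this]

lemma dot_gam {n m : ℕ} (φ : Fin m → (Fin n → ℝ) → ℝ)
    (φ' : Fin m → (Fin n → ℝ) → (Fin n → ℝ)) (z w : Fin n ⊕ Fin m → ℝ) :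
    z ⬝ᵥ Gam φ φ' w
      = (∑ i, lpart w i * (xpart z ⬝ᵥ φ' i (xpart w))) - ∑ i, lpart z i * φ i (xpart w) := by
  have hz : z = Sum.elim (xpart z) (lpart z) := by funext s; cases s <;> rfl
  conv_lhs => rw [hz]
  rw [Gam, sumElim_dotProduct_sumElim, dot_sum]
  simp only [dotProduct_smul, smul_eq_mul]
  simp [dotProduct, mul_neg, sub_eq_add_neg, Finset.sum_neg_distrib]

lemma gam_mono {n m : ℕ} {X : Set (Fin n → ℝ)}
    (φ : Fin m → (Fin n → ℝ) → ℝ) (hφ : ∀ i, ConvexOn ℝ Set.univ (φ i))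
    (φ' : Fin m → (Fin n → ℝ) → (Fin n → ℝ))
    (hφ' : ∀ i x, HasFDerivAt (φ i) (dotCLM (φ' i x)) x)
    (u v : Fin n ⊕ Fin m → ℝ) (hu : u ∈ OmegaSet (m := m) X) (hv : v ∈ OmegaSet (m := m) X) :
    (v - u) ⬝ᵥ Gam φ φ' u ≤ (v - u) ⬝ᵥ Gam φ φ' v := by
  rw [dot_gam, dot_gam]
  have hx : xpart (v - u) = xpart v - xpart u := rfl
  have hl : lpart (v - u) = lpart v - lpart u := rfl
  rw [hx, hl, ← sub_nonneg]
  have key : ∀ i : Fin m, 0 ≤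
      (lpart v i * ((xpart v - xpart u) ⬝ᵥ φ' i (xpart v))
        - (lpart v - lpart u) i * φ i (xpart v))
      - (lpart u i * ((xpart v - xpart u) ⬝ᵥ φ' i (xpart u))
        - (lpart v - lpart u) i * φ i (xpart u)) := by
    intro i
    have h1 : φ' i (xpart v) ⬝ᵥ (xpart u - xpart v) ≤ φ i (xpart u) - φ i (xpart v) :=
      grad_ineq (hφ i) (hφ' i) _ _
    have h2 : φ' i (xpart u) ⬝ᵥ (xpart v - xpart u) ≤ φ i (xpart v) - φ i (xpart u) :=
      grad_ineq (hφ i) (hφ' i) _ _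
    have e1 : φ' i (xpart v) ⬝ᵥ (xpart u - xpart v)
        = -((xpart v - xpart u) ⬝ᵥ φ' i (xpart v)) := by
      rw [show xpart u - xpart v = -(xpart v - xpart u) from (neg_sub _ _).symm,
        dotProduct_neg, dotProduct_comm]
    have e2 : φ' i (xpart u) ⬝ᵥ (xpart v - xpart u)
        = (xpart v - xpart u) ⬝ᵥ φ' i (xpart u) := dotProduct_comm _ _
    rw [e1] at h1
    rw [e2] at h2
    have hv2 := hv.2 i
    have hu2 := hu.2 i
    have t1 : (0:ℝ) ≤ (xpart v - xpart u) ⬝ᵥ φ' i (xpart v)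
        - (φ i (xpart v) - φ i (xpart u)) := by linarith
    have t2 : (0:ℝ) ≤ (φ i (xpart v) - φ i (xpart u))
        - (xpart v - xpart u) ⬝ᵥ φ' i (xpart u) := by linarith
    have m1 := mul_nonneg hv2 t1
    have m2 := mul_nonneg hu2 t2
    simp only [Pi.sub_apply]
    nlinarith [m1, m2]
  have := Finset.sum_nonneg (fun i (_ : i ∈ (Finset.univ : Finset (Fin m))) => key i)
  calc (0:ℝ) ≤ _ := this
    _ = _ := by
      rw [Finset.sum_sub_distrib, Finset.sum_sub_distrib, Finset.sum_sub_distrib]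

lemma step_ineq {ι : Type*} [Fintype ι] [DecidableEq ι] {β : ℝ} (hβ : 0 < β)
    (S Qm Mm : Matrix ι ι ℝ) (hS : Sᵀ = S) (hQ : Qm = S * Mm)
    (hGpsd : (Qmᵀ + Qm - β • (Mmᵀ * S * Mm)).PosSemidef)
    (p d : ι → ℝ) :
    (p + β • Mm *ᵥ d) ⬝ᵥ S *ᵥ (p + β • Mm *ᵥ d) - p ⬝ᵥ S *ᵥ p
      ≤ 2 * β * ((p + d) ⬝ᵥ Qm *ᵥ d) := by
  have hsym : ∀ x y : ι → ℝ, x ⬝ᵥ S *ᵥ y = y ⬝ᵥ S *ᵥ x := by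
    intro x y
    rw [dotProduct_mulVec, ← mulVec_transpose, hS, dotProduct_comm]
  have hq : S *ᵥ (Mm *ᵥ d) = Qm *ᵥ d := by rw [mulVec_mulVec, ← hQ]
  have hMSM : d ⬝ᵥ (Mmᵀ * S * Mm) *ᵥ d = (Mm *ᵥ d) ⬝ᵥ (Qm *ᵥ d) := by
    rw [← mulVec_mulVec, ← mulVec_mulVec, hq, dotProduct_mulVec, vecMul_transpose]
  have hQT : d ⬝ᵥ Qmᵀ *ᵥ d = d ⬝ᵥ Qm *ᵥ d := by
    rw [dotProduct_mulVec, vecMul_transpose, dotProduct_comm]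
  have hpsd := hGpsd.dotProduct_mulVec_nonneg d
  simp only [star_trivial] at hpsd
  rw [Matrix.sub_mulVec, Matrix.add_mulVec, Matrix.smul_mulVec, dotProduct_sub,
    dotProduct_add, dotProduct_smul, smul_eq_mul, hQT, hMSM] at hpsd
  have hexp : (p + β • Mm *ᵥ d) ⬝ᵥ S *ᵥ (p + β • Mm *ᵥ d)
      = p ⬝ᵥ S *ᵥ p + 2*β*(p ⬝ᵥ Qm *ᵥ d) + β^2 * ((Mm *ᵥ d) ⬝ᵥ (Qm *ᵥ d)) := by
    simp only [mulVec_add, mulVec_smul, dotProduct_add, add_dotProduct, dotProduct_smul,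
      smul_dotProduct, smul_eq_mul]
    rw [hsym (Mm *ᵥ d) p, hq]
    ring
  rw [hexp, add_dotProduct]
  nlinarith [mul_nonneg hβ.le hpsd]

lemma telescope (a b : ℕ → ℝ) (t : ℕ) (h : ∀ k, k < t → a (k+1) ≤ b k) (hb : 0 ≤ b t) :
    ∑ k ∈ Finset.range (t+1), (a k - b k) ≤ a 0 := by
  rw [Finset.sum_sub_distrib, Finset.sum_range_succ' a t, Finset.sum_range_succ b t]
  have : ∑ k ∈ Finset.range t, a (k+1) ≤ ∑ k ∈ Finset.range t, b k :=
    Finset.sum_le_sum (fun k hk => h k (Finset.mem_range.mp hk))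
  linarith

/-- `O(1/t)` ergodic convergence rate of the prediction-correction method. -/
theorem stmt13 {n m : ℕ}
    (hn : 0 < n) (hm : 0 < m)
    (X : Set (Fin n → ℝ)) (hXne : X.Nonempty) (hXcl : IsClosed X) (hXcvx : Convex ℝ X)
    (f : (Fin n → ℝ) → ℝ) (hf : ConvexOn ℝ Set.univ f)
    (φ : Fin m → (Fin n → ℝ) → ℝ) (hφ : ∀ i, ConvexOn ℝ Set.univ (φ i))
    (φ' : Fin m → (Fin n → ℝ) → (Fin n → ℝ))
    (hφ' : ∀ i x, HasFDerivAt (φ i) (dotCLM (φ' i x)) x)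
    (hφ'c : ∀ i, Continuous (φ' i))
    (β : ℝ) (hβ : 0 < β) (t : ℕ)
    (Q M : ℕ → Matrix (Fin n ⊕ Fin m) (Fin n ⊕ Fin m) ℝ)
    (hM : ∀ k ≤ t, IsUnit (M k))
    (hSig : ∀ k ≤ t, (Q k * (M k)⁻¹).PosSemidef)
    (hG : ∀ k ≤ t,
      ((Q k)ᵀ + Q k - β • ((M k)ᵀ * (Q k * (M k)⁻¹) * M k)).PosSemidef)
    (hSd : ∀ k, 1 ≤ k → k ≤ t →
      (Q (k - 1) * (M (k - 1))⁻¹ - Q k * (M k)⁻¹).PosSemidef)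
    (w wt : ℕ → (Fin n ⊕ Fin m → ℝ))
    (hmem : ∀ k ≤ t, wt k ∈ OmegaSet (m := m) X)
    (hpred : ∀ k ≤ t, ∀ u ∈ OmegaSet (m := m) X,
      f (xpart u) - f (xpart (wt k)) + (u - wt k) ⬝ᵥ Gam φ φ' (wt k)
        ≥ (u - wt k) ⬝ᵥ (Q k).mulVec (w k - wt k))
    (hrec : ∀ k ≤ t, w (k + 1) = w k - β • (M k).mulVec (w k - wt k)) :
    ((1 / ((t : ℝ) + 1)) • ∑ k ∈ Finset.range (t + 1), wt k) ∈ OmegaSet (m := m) X ∧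
    ∀ u ∈ OmegaSet (m := m) X,
      f ((1 / ((t : ℝ) + 1)) • ∑ k ∈ Finset.range (t + 1), xpart (wt k)) - f (xpart u)
        + (((1 / ((t : ℝ) + 1)) • ∑ k ∈ Finset.range (t + 1), wt k) - u) ⬝ᵥ Gam φ φ' u
      ≤ ((u - w 0) ⬝ᵥ (Q 0 * (M 0)⁻¹).mulVec (u - w 0)) / (2 * β * (1 + (t : ℝ))) := by
  have hT : (0:ℝ) < (t:ℝ) + 1 := by positivity
  have hmemr : ∀ k ∈ Finset.range (t+1), wt k ∈ OmegaSet (m := m) X :=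
    fun k hk => hmem k (Nat.lt_succ_iff.mp (Finset.mem_range.mp hk))
  have hone : ∑ _k ∈ Finset.range (t+1), (1/((t:ℝ)+1)) = 1 := by
    rw [Finset.sum_const, Finset.card_range, nsmul_eq_mul]
    push_cast
    field_simp
  constructor
  · refine ⟨?_, fun j => ?_⟩
    · have hx : xpart ((1 / ((t:ℝ) + 1)) • ∑ k ∈ Finset.range (t + 1), wt k)
          = ∑ k ∈ Finset.range (t+1), (1 / ((t:ℝ)+1)) • xpart (wt k) := by
        funext i
        simp [xpart, Finset.sum_apply, Finset.mul_sum]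
      rw [hx]
      exact hXcvx.sum_mem (fun i _ => by positivity) hone (fun i hi => (hmemr i hi).1)
    · have hx : lpart ((1 / ((t:ℝ) + 1)) • ∑ k ∈ Finset.range (t + 1), wt k) j
          = (1/((t:ℝ)+1)) * ∑ k ∈ Finset.range (t+1), lpart (wt k) j := by
        simp [lpart, Finset.sum_apply, Finset.mul_sum]
      rw [hx]
      exact mul_nonneg (by positivity)
        (Finset.sum_nonneg fun k hk => (hmemr k hk).2 j)
  · intro u hu
    have hSsym : ∀ k, k ≤ t → (Q k * (M k)⁻¹)ᵀ = Q k * (M k)⁻¹ := by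
      intro k hk
      have h := (hSig k hk).1
      rwa [Matrix.IsHermitian, conjTranspose_eq_transpose_of_trivial] at h
    have hQeq : ∀ k, k ≤ t → Q k = (Q k * (M k)⁻¹) * M k := by
      intro k hk
      rw [Matrix.mul_assoc,
        Matrix.nonsing_inv_mul _ ((Matrix.isUnit_iff_isUnit_det _).mp (hM k hk)),
        Matrix.mul_one]
    have hkey : ∀ k, k ≤ t →
        2*β*(f (xpart (wt k)) - f (xpart u) + ((wt k - u) ⬝ᵥ Gam φ φ' u))
          ≤ (u - w k) ⬝ᵥ (Q k * (M k)⁻¹) *ᵥ (u - w k)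
            - (u - w (k+1)) ⬝ᵥ (Q k * (M k)⁻¹) *ᵥ (u - w (k+1)) := by
      intro k hk
      have hmono := gam_mono φ hφ φ' hφ' u (wt k) hu (hmem k hk)
      have hp := hpred k hk u hu
      have hstep := step_ineq hβ (Q k * (M k)⁻¹) (Q k) (M k) (hSsym k hk) (hQeq k hk)
        (hG k hk) (u - w k) (w k - wt k)
      have hw : u - w (k+1) = (u - w k) + β • (M k) *ᵥ (w k - wt k) := by
        rw [hrec k hk]
        module
      have hpd : (u - w k) + (w k - wt k) = u - wt k := by abel
      rw [← hw, hpd] at hstep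
      have hneg1 : (wt k - u) ⬝ᵥ Gam φ φ' (wt k) = -((u - wt k) ⬝ᵥ Gam φ φ' (wt k)) := by
        rw [← neg_sub u (wt k), neg_dotProduct]
      have hneg2 : (wt k - u) ⬝ᵥ Gam φ φ' u = -((u - wt k) ⬝ᵥ Gam φ φ' u) := by
        rw [← neg_sub u (wt k), neg_dotProduct]
      rw [hneg1, hneg2] at hmono
      have hcomb : f (xpart (wt k)) - f (xpart u) + ((wt k - u) ⬝ᵥ Gam φ φ' u)
          ≤ -((u - wt k) ⬝ᵥ (Q k) *ᵥ (w k - wt k)) := by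
        rw [hneg2]
        linarith [hp, hmono]
      have hmul := mul_le_mul_of_nonneg_left hcomb (by positivity : (0:ℝ) ≤ 2*β)
      linarith [hstep, hmul]
    have htel : ∑ k ∈ Finset.range (t+1),
        ((u - w k) ⬝ᵥ (Q k * (M k)⁻¹) *ᵥ (u - w k)
          - (u - w (k+1)) ⬝ᵥ (Q k * (M k)⁻¹) *ᵥ (u - w (k+1)))
        ≤ (u - w 0) ⬝ᵥ (Q 0 * (M 0)⁻¹) *ᵥ (u - w 0) := by
      refine telescope (fun k => (u - w k) ⬝ᵥ (Q k * (M k)⁻¹) *ᵥ (u - w k))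
        (fun k => (u - w (k+1)) ⬝ᵥ (Q k * (M k)⁻¹) *ᵥ (u - w (k+1))) t ?_ ?_
      · intro k hk
        have hps := hSd (k+1) (by omega) (by omega)
        simp only [Nat.add_sub_cancel] at hps
        have h2 := hps.dotProduct_mulVec_nonneg (u - w (k+1))
        simp only [star_trivial] at h2
        rw [Matrix.sub_mulVec, dotProduct_sub] at h2
        linarith
      · have h2 := (hSig t le_rfl).dotProduct_mulVec_nonneg (u - w (t+1))
        simp only [star_trivial] at h2
        simpa using h2
    have hsum1 := Finset.sum_le_sum
      (fun k hk => hkey k (Nat.lt_succ_iff.mp (Finset.mem_range.mp hk)))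
    have hdotsum : ∑ k ∈ Finset.range (t+1), ((wt k - u) ⬝ᵥ Gam φ φ' u)
        = (∑ k ∈ Finset.range (t+1), wt k) ⬝ᵥ Gam φ φ' u
          - ((t:ℝ)+1) * (u ⬝ᵥ Gam φ φ' u) := by
      rw [sum_dot]
      simp only [sub_dotProduct]
      rw [Finset.sum_sub_distrib]
      rw [Finset.sum_const, Finset.card_range, nsmul_eq_mul]
      push_cast
      ring
    have hL : ∑ k ∈ Finset.range (t+1),
        (2*β*(f (xpart (wt k)) - f (xpart u) + ((wt k - u) ⬝ᵥ Gam φ φ' u)))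
        = 2*β*((∑ k ∈ Finset.range (t+1), f (xpart (wt k))) - ((t:ℝ)+1) * f (xpart u)
          + ((∑ k ∈ Finset.range (t+1), wt k) ⬝ᵥ Gam φ φ' u
            - ((t:ℝ)+1) * (u ⬝ᵥ Gam φ φ' u))) := by
      rw [← Finset.mul_sum]
      congr 1
      rw [Finset.sum_add_distrib, Finset.sum_sub_distrib, hdotsum]
      rw [Finset.sum_const, Finset.card_range, nsmul_eq_mul]
      push_cast
      ring
    have hsum2 : 2*β*((∑ k ∈ Finset.range (t+1), f (xpart (wt k))) - ((t:ℝ)+1) * f (xpart u)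
        + ((∑ k ∈ Finset.range (t+1), wt k) ⬝ᵥ Gam φ φ' u
          - ((t:ℝ)+1) * (u ⬝ᵥ Gam φ φ' u)))
        ≤ (u - w 0) ⬝ᵥ (Q 0 * (M 0)⁻¹) *ᵥ (u - w 0) := by
      rw [← hL]
      exact le_trans hsum1 htel
    have hJ : ((t:ℝ)+1) * f ((1/((t:ℝ)+1)) • ∑ k ∈ Finset.range (t+1), xpart (wt k))
        ≤ ∑ k ∈ Finset.range (t+1), f (xpart (wt k)) := by
      have hmem2 : ∀ k ∈ Finset.range (t+1), xpart (wt k) ∈ (Set.univ : Set (Fin n → ℝ)) :=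
        fun _ _ => trivial
      have hJ0 := hf.map_sum_le (fun k _ => by positivity : ∀ k ∈ Finset.range (t+1),
        (0:ℝ) ≤ 1/((t:ℝ)+1)) hone hmem2
      rw [← Finset.smul_sum] at hJ0
      have hR : ∑ k ∈ Finset.range (t+1), (1/((t:ℝ)+1)) • f (xpart (wt k))
          = (1/((t:ℝ)+1)) * ∑ k ∈ Finset.range (t+1), f (xpart (wt k)) := by
        rw [Finset.mul_sum]
        simp [smul_eq_mul]
      rw [hR] at hJ0
      have := mul_le_mul_of_nonneg_left hJ0 hT.le
      calc ((t:ℝ)+1) * f ((1/((t:ℝ)+1)) • ∑ k ∈ Finset.range (t+1), xpart (wt k))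
          ≤ ((t:ℝ)+1) * ((1/((t:ℝ)+1)) * ∑ k ∈ Finset.range (t+1), f (xpart (wt k))) := this
        _ = ∑ k ∈ Finset.range (t+1), f (xpart (wt k)) := by
            field_simp
    have hlin : ((1/((t:ℝ)+1)) • ∑ k ∈ Finset.range (t+1), wt k - u) ⬝ᵥ Gam φ φ' u
        = (1/((t:ℝ)+1)) * ((∑ k ∈ Finset.range (t+1), wt k) ⬝ᵥ Gam φ φ' u)
          - u ⬝ᵥ Gam φ φ' u := by
      rw [sub_dotProduct, smul_dotProduct, smul_eq_mul]
    rw [hlin]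
    rw [le_div_iff₀ (by positivity : (0:ℝ) < 2*β*(1+(t:ℝ)))]
    set A := f ((1/((t:ℝ)+1)) • ∑ k ∈ Finset.range (t+1), xpart (wt k)) with hA
    set fu := f (xpart u) with hfu
    set SF := ∑ k ∈ Finset.range (t+1), f (xpart (wt k)) with hSF
    set Dg := (∑ k ∈ Finset.range (t+1), wt k) ⬝ᵥ Gam φ φ' u with hDg
    set ug := u ⬝ᵥ Gam φ φ' u with hug
    set N0 := (u - w 0) ⬝ᵥ (Q 0 * (M 0)⁻¹) *ᵥ (u - w 0) with hN0
    have e1 : (A - fu + ((1/((t:ℝ)+1))*Dg - ug)) * (2*β*(1+(t:ℝ)))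
        = 2*β*(((t:ℝ)+1)*A - ((t:ℝ)+1)*fu + (Dg - ((t:ℝ)+1)*ug)) := by
      field_simp
      ring
    rw [e1]
    have e2 := mul_le_mul_of_nonneg_left
      (show ((t:ℝ)+1)*A - ((t:ℝ)+1)*fu + (Dg - ((t:ℝ)+1)*ug)
          ≤ SF - ((t:ℝ)+1)*fu + (Dg - ((t:ℝ)+1)*ug) from by linarith [hJ])
      (show (0:ℝ) ≤ 2*β from by positivity)
    linarith [hsum2, e2]
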